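/- arXiv:2004.09899 — 4 statements merged into one kernel-verified Lean document; each statement's English description precedes it below -/
import Mathlib

section
/- Let B denote the Bayes factor of the constrained hypothesis H_c : θ_e = r_e, θ_o ∈ O against the unconstrained hypothesis H_u, i.e. B = Z_c / Z_u where Z_c = ∫∫ f(r_e, θ_o, φ) π_c(θ_o, φ) d(μ_o ⊗ μ_φ). Then B = (m1 / (m0 · P*)) · ∫∫ 1_O(θ_o) · (π*(θ_o, φ) / q(θ_o, φ)) · w(θ_o, φ) d(μ_o ⊗ μ_φ); that is, the Bayes factor equals the Savage–Dickey density ratio m1/m0, divided by the completed-prior probability P* of the order constraints, times the expectation under the conditional posterior w of the ratio of the completed constrained prior π* to the conditional unconstrained prior q, restricted to the order-constrained region O. -/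
open MeasureTheory

/-!
After substituting `q` and `w`, the conditional prior `πu (re, ·)` cancels between `πstar / q`
and `w`, leaving `m0 / (m1 * Zu)` times `1_O * πstar * f (re, ·)`, whose integral is `Pstar * Zc`.
Where `πu (re, ·)` vanishes the cancellation is not available, but there the support condition
(with nonnegativity) makes both integrands zero, the left one because division by zero gives zero.
-/

lemma mul_div_div_mul_div_eq {a b f u m c : ℝ} (h : a * b * f ≠ 0 → u ≠ 0) :
    a * (b / (u / m)) * (f * u / c) = m / c * (a * b * f) := by
  by_cases hu : u = 0
  · have hzero : a * b * f = 0 := not_imp_not.mp h hu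
    simp only [hu, zero_div, div_zero, mul_zero, hzero]
  · rw [div_div_eq_mul_div]
    field_simp

theorem integral_mul_div_div_mul_div {α : Type*} [MeasurableSpace α] {ν : Measure α}
    {a b f u : α → ℝ} (m c : ℝ) (hsupp : ∀ᵐ x ∂ν, a x * b x * f x ≠ 0 → u x ≠ 0) :
    ∫ x, a x * (b x / (u x / m)) * (f x * u x / c) ∂ν = m / c * ∫ x, a x * b x * f x ∂ν := by
  rw [← integral_const_mul]
  exact integral_congr_ae (hsupp.mono fun _ hx => mul_div_div_mul_div_eq hx)

theorem savage_dickey_equality_order_constraints_general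
    {Θe Θo Φ : Type*} [MeasurableSpace Θo] [MeasurableSpace Φ]
    (μo : Measure Θo) (μφ : Measure Φ)
    (f πu : Θe × Θo × Φ → ℝ)
    (hf0 : ∀ x, 0 ≤ f x)
    (Zu : ℝ)
    (re : Θe)
    (m0 : ℝ) (hm0pos : 0 < m0)
    (m1 : ℝ) (hm1pos : 0 < m1)
    (q w : Θo × Φ → ℝ)
    (hq : ∀ p, q p = πu (re, p) / m0)
    (hw : ∀ p, w p = f (re, p) * πu (re, p) / (m1 * Zu))
    (O : Set Θo)
    (πstar : Θo × Φ → ℝ) (hπstar0 : ∀ p, 0 ≤ πstar p)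
    (Pstar : ℝ)
    (πc : Θo × Φ → ℝ)
    (hπc : ∀ p, πc p = Pstar⁻¹ * πstar p * O.indicator (fun _ => (1 : ℝ)) p.1)
    (hsupp : ∀ᵐ p ∂(μo.prod μφ),
      0 < O.indicator (fun _ => (1 : ℝ)) p.1 * πstar p * f (re, p) → 0 < πu (re, p))
    (Zc : ℝ) (hZc : Zc = ∫ p, f (re, p) * πc p ∂(μo.prod μφ))
    (B : ℝ) (hB : B = Zc / Zu) :
    B = m1 / (m0 * Pstar) *
      ∫ p, O.indicator (fun _ => (1 : ℝ)) p.1 * (πstar p / q p) * w p ∂(μo.prod μφ) := by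
  set ind : Θo × Φ → ℝ := fun p => O.indicator (fun _ => (1 : ℝ)) p.1
  have hsupp_ne : ∀ᵐ p ∂(μo.prod μφ), ind p * πstar p * f (re, p) ≠ 0 → πu (re, p) ≠ 0 := by
    refine hsupp.mono fun p hp hne => (hp (lt_of_le_of_ne ?_ hne.symm)).ne'
    exact mul_nonneg (mul_nonneg (Set.indicator_nonneg (fun _ _ => zero_le_one) _)
      (hπstar0 p)) (hf0 _)
  have hZc_eq : Zc = Pstar⁻¹ * ∫ p, ind p * πstar p * f (re, p) ∂(μo.prod μφ) := by
    rw [hZc, ← integral_const_mul]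
    exact integral_congr_ae (Filter.Eventually.of_forall fun p => by simp only [hπc, ind]; ring)
  simp only [hq, hw]
  rw [integral_mul_div_div_mul_div m0 (m1 * Zu) hsupp_ne, hB, hZc_eq]
  field_simp

/-- Generalized Savage–Dickey density ratio for a hypothesis with equality and
order constraints: the Bayes factor of `H_c : θ_e = r_e, θ_o ∈ O` against the
unconstrained `H_u` equals the Savage–Dickey ratio `m1 / m0`, divided by the
completed-prior probability `Pstar` of the order constraints, times the
expectation under the conditional posterior `w` of the ratio of the completed
constrained prior `πstar` to the conditional unconstrained prior `q`,
restricted to the order-constrained region `O`. -/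
theorem savage_dickey_equality_order_constraints
    {Θe Θo Φ : Type*} [MeasurableSpace Θe] [MeasurableSpace Θo] [MeasurableSpace Φ]
    (μe : Measure Θe) (μo : Measure Θo) (μφ : Measure Φ)
    [SigmaFinite μe] [SigmaFinite μo] [SigmaFinite μφ]
    (f πu : Θe × Θo × Φ → ℝ)
    (hfm : Measurable f) (hπum : Measurable πu)
    (hf0 : ∀ x, 0 ≤ f x) (hπu0 : ∀ x, 0 ≤ πu x)
    (hπu1 : ∫ x, πu x ∂(μe.prod (μo.prod μφ)) = 1)
    (Zu : ℝ) (hZu : Zu = ∫ x, f x * πu x ∂(μe.prod (μo.prod μφ)))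
    (hZuInt : Integrable (fun x => f x * πu x) (μe.prod (μo.prod μφ)))
    (hZupos : 0 < Zu)
    (re : Θe)
    (m0 : ℝ) (hm0 : m0 = ∫ p, πu (re, p) ∂(μo.prod μφ))
    (hm0Int : Integrable (fun p => πu (re, p)) (μo.prod μφ)) (hm0pos : 0 < m0)
    (m1 : ℝ) (hm1 : m1 = Zu⁻¹ * ∫ p, f (re, p) * πu (re, p) ∂(μo.prod μφ))
    (hm1Int : Integrable (fun p => f (re, p) * πu (re, p)) (μo.prod μφ)) (hm1pos : 0 < m1)
    (q w : Θo × Φ → ℝ)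
    (hq : ∀ p, q p = πu (re, p) / m0)
    (hw : ∀ p, w p = f (re, p) * πu (re, p) / (m1 * Zu))
    (O : Set Θo) (hO : MeasurableSet O)
    (πstar : Θo × Φ → ℝ) (hπstarm : Measurable πstar) (hπstar0 : ∀ p, 0 ≤ πstar p)
    (hπstar1 : ∫ p, πstar p ∂(μo.prod μφ) = 1)
    (Pstar : ℝ)
    (hPstar : Pstar = ∫ p, O.indicator (fun _ => (1 : ℝ)) p.1 * πstar p ∂(μo.prod μφ))
    (hPstarpos : 0 < Pstar)
    (πc : Θo × Φ → ℝ)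
    (hπc : ∀ p, πc p = Pstar⁻¹ * πstar p * O.indicator (fun _ => (1 : ℝ)) p.1)
    (hsupp : ∀ᵐ p ∂(μo.prod μφ),
      0 < O.indicator (fun _ => (1 : ℝ)) p.1 * πstar p * f (re, p) → 0 < πu (re, p))
    (Zc : ℝ) (hZc : Zc = ∫ p, f (re, p) * πc p ∂(μo.prod μφ))
    (B : ℝ) (hB : B = Zc / Zu) :
    B = m1 / (m0 * Pstar) *
      ∫ p, O.indicator (fun _ => (1 : ℝ)) p.1 * (πstar p / q p) * w p ∂(μo.prod μφ) :=
  savage_dickey_equality_order_constraints_general μo μφ f πu hf0 Zu re m0 hm0pos m1 hm1pos q w hq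
    hw O πstar hπstar0 Pstar πc hπc hsupp Zc hZc B hB
end

section
/- Suppose the constrained prior is the truncation of the conditional unconstrained prior to the order-constrained region: π_c(θ_o, φ) = q(θ_o, φ) 1_O(θ_o) / Q0, where Q0 = ∫∫ 1_O(θ_o) q(θ_o, φ) d(μ_o ⊗ μ_φ) is assumed finite and strictly positive. Let Q1 = ∫∫ 1_O(θ_o) w(θ_o, φ) d(μ_o ⊗ μ_φ) be the conditional posterior probability of the order constraints. Then the Bayes factor B = Z_c / Z_u, with Z_c = ∫∫ f(r_e, θ_o, φ) π_c(θ_o, φ) d(μ_o ⊗ μ_φ), satisfies B = (m1/m0) · (Q1/Q0); that is, the Bayes factor equals the Savage–Dickey density ratio times the ratio of the conditional posterior and conditional prior probabilities of the order constraints. -/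
/-!
Both `Zc` and `Q1` are rescalings of one integral, the unnormalised posterior mass
`I = ∫ 1_O(θo) f(re, θo, φ) πu(re, θo, φ)` of the order-constrained region at `θe = re`:
`Zc = I / (m0 Q0)` and `Q1 = I / (m1 Zu)`. Eliminating `I` gives the identity.
-/

open MeasureTheory

theorem integral_eq_integral_div_of_forall_eq_div {α : Type*} [MeasurableSpace α]
    {μ : Measure α} {F G : α → ℝ} {c : ℝ} (h : ∀ x, F x = G x / c) :
    ∫ x, F x ∂μ = (∫ x, G x ∂μ) / c := by
  simp_rw [h]
  exact integral_div c G

theorem div_eq_div_mul_div_of_eq_div {Zc Zu m0 m1 Q0 Q1 I : ℝ} (hm1 : m1 ≠ 0)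
    (hZc : Zc = I / (m0 * Q0)) (hQ1 : Q1 = I / (m1 * Zu)) :
    Zc / Zu = m1 / m0 * (Q1 / Q0) := by
  rw [hZc, hQ1]
  field_simp

theorem savage_dickey_truncated_prior_general
    {Θe Θo Φ : Type*} [MeasurableSpace Θo] [MeasurableSpace Φ]
    (μo : Measure Θo) (μφ : Measure Φ)
    (f πu : Θe × Θo × Φ → ℝ)
    (Zu : ℝ)
    (re : Θe)
    (m0 : ℝ)
    (m1 : ℝ) (hm1pos : 0 < m1)
    (q w : Θo × Φ → ℝ)
    (hq : ∀ p, q p = πu (re, p) / m0)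
    (hw : ∀ p, w p = f (re, p) * πu (re, p) / (m1 * Zu))
    (O : Set Θo)
    (Q0 : ℝ)
    (Q1 : ℝ) (hQ1 : Q1 = ∫ p, O.indicator (fun _ => (1 : ℝ)) p.1 * w p ∂(μo.prod μφ))
    (πc : Θo × Φ → ℝ)
    (hπc : ∀ p, πc p = q p * O.indicator (fun _ => (1 : ℝ)) p.1 / Q0)
    (Zc : ℝ) (hZc : Zc = ∫ p, f (re, p) * πc p ∂(μo.prod μφ))
    (B : ℝ) (hB : B = Zc / Zu) :
    B = m1 / m0 * (Q1 / Q0) := by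
  set I := ∫ p, O.indicator (fun _ => (1 : ℝ)) p.1 * (f (re, p) * πu (re, p)) ∂(μo.prod μφ)
  have hZcI : Zc = I / (m0 * Q0) :=
    hZc.trans <| integral_eq_integral_div_of_forall_eq_div fun p => by rw [hπc, hq]; ring
  have hQ1I : Q1 = I / (m1 * Zu) :=
    hQ1.trans <| integral_eq_integral_div_of_forall_eq_div fun p => by rw [hw]; ring
  rw [hB]
  exact div_eq_div_mul_div_of_eq_div hm1pos.ne' hZcI hQ1I

/-- Savage–Dickey density ratio for equality and order constraints when the
constrained prior is the truncation of the conditional unconstrained prior to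
the order-constrained region: the Bayes factor equals the Savage–Dickey ratio
`m1 / m0` times the ratio `Q1 / Q0` of the conditional posterior and conditional
prior probabilities of the order constraints. -/
theorem savage_dickey_truncated_prior
    {Θe Θo Φ : Type*} [MeasurableSpace Θe] [MeasurableSpace Θo] [MeasurableSpace Φ]
    (μe : Measure Θe) (μo : Measure Θo) (μφ : Measure Φ)
    [SigmaFinite μe] [SigmaFinite μo] [SigmaFinite μφ]
    (f πu : Θe × Θo × Φ → ℝ)
    (hfm : Measurable f) (hπum : Measurable πu)
    (hf0 : ∀ x, 0 ≤ f x) (hπu0 : ∀ x, 0 ≤ πu x)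
    (hπu1 : ∫ x, πu x ∂(μe.prod (μo.prod μφ)) = 1)
    (Zu : ℝ) (hZu : Zu = ∫ x, f x * πu x ∂(μe.prod (μo.prod μφ)))
    (hZuInt : Integrable (fun x => f x * πu x) (μe.prod (μo.prod μφ)))
    (hZupos : 0 < Zu)
    (re : Θe)
    (m0 : ℝ) (hm0 : m0 = ∫ p, πu (re, p) ∂(μo.prod μφ))
    (hm0Int : Integrable (fun p => πu (re, p)) (μo.prod μφ)) (hm0pos : 0 < m0)
    (m1 : ℝ) (hm1 : m1 = Zu⁻¹ * ∫ p, f (re, p) * πu (re, p) ∂(μo.prod μφ))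
    (hm1Int : Integrable (fun p => f (re, p) * πu (re, p)) (μo.prod μφ)) (hm1pos : 0 < m1)
    (q w : Θo × Φ → ℝ)
    (hq : ∀ p, q p = πu (re, p) / m0)
    (hw : ∀ p, w p = f (re, p) * πu (re, p) / (m1 * Zu))
    (O : Set Θo) (hO : MeasurableSet O)
    (Q0 : ℝ) (hQ0 : Q0 = ∫ p, O.indicator (fun _ => (1 : ℝ)) p.1 * q p ∂(μo.prod μφ))
    (hQ0Int : Integrable (fun p => O.indicator (fun _ => (1 : ℝ)) p.1 * q p) (μo.prod μφ))
    (hQ0pos : 0 < Q0)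
    (Q1 : ℝ) (hQ1 : Q1 = ∫ p, O.indicator (fun _ => (1 : ℝ)) p.1 * w p ∂(μo.prod μφ))
    (πc : Θo × Φ → ℝ)
    (hπc : ∀ p, πc p = q p * O.indicator (fun _ => (1 : ℝ)) p.1 / Q0)
    (Zc : ℝ) (hZc : Zc = ∫ p, f (re, p) * πc p ∂(μo.prod μφ))
    (B : ℝ) (hB : B = Zc / Zu) :
    B = m1 / m0 * (Q1 / Q0) :=
  savage_dickey_truncated_prior_general μo μφ f πu Zu re m0 m1 hm1pos q w hq hw O Q0 Q1 hQ1 πc hπc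
    Zc hZc B hB
end

section
/- (Verdinelli–Wasserman generalized Savage–Dickey density ratio.) Let π_c : Φ → [0,∞) be any measurable probability density with respect to μ_φ (the constrained prior for the nuisance parameters), and assume the support condition: π_u(r, φ) > 0 for μ_φ-almost every φ with π_c(φ) f(r, φ) > 0. Then the Bayes factor B = Z_c / Z_u, where Z_c = ∫ f(r, φ) π_c(φ) dμ_φ, satisfies B = (m1/m0) · ∫ (π_c(φ)/q(φ)) w(φ) dμ_φ; that is, the Bayes factor equals the Savage–Dickey density ratio m1/m0 times the expectation, under the conditional posterior w, of the ratio of the constrained prior π_c to the conditional unconstrained prior q. -/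
open MeasureTheory

/-! Since `q = πu(r, ·) / m0` and `w = f(r, ·) πu(r, ·) / (m1 Zu)`, the factor `πu(r, φ)` cancels
in `(πc / q) w` wherever it is nonzero, leaving `f(r, φ) πc(φ) m0 / (m1 Zu)`. Where `πu(r, φ) = 0`
both sides vanish: the left one because real division by zero is zero, the right one by the
support condition. Integrating, `m1 / m0 · ∫ (πc / q) w = Zc / Zu`. -/

lemma mul_eq_zero_of_pos_imp_pos {a b x : ℝ} (ha : 0 ≤ a) (hb : 0 ≤ b)
    (h : 0 < a * b → 0 < x) (hx : x = 0) : a * b = 0 := by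
  by_contra hab
  exact (h (lt_of_le_of_ne (mul_nonneg ha hb) (Ne.symm hab))).ne' hx

lemma div_div_mul_mul_div_eq {a b x s t : ℝ} (h : x = 0 → a * b = 0) :
    a / (x / s) * (b * x / t) = b * a * (s / t) := by
  by_cases hx : x = 0
  · simp [hx, mul_comm b a, h hx]
  · by_cases hs : s = 0
    · simp [hs]
    · field_simp

theorem integral_div_div_mul_mul_div {Φ : Type*} [MeasurableSpace Φ] {μ : Measure Φ}
    {a b x : Φ → ℝ} (s t : ℝ) (h : ∀ᵐ φ ∂μ, x φ = 0 → a φ * b φ = 0) :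
    ∫ φ, a φ / (x φ / s) * (b φ * x φ / t) ∂μ = (∫ φ, b φ * a φ ∂μ) * (s / t) := by
  rw [integral_congr_ae (h.mono fun _ hφ => div_div_mul_mul_div_eq hφ), integral_mul_const]

theorem generalized_savage_dickey_density_ratio_general
    {Θ Φ : Type*} [MeasurableSpace Φ]
    (μφ : Measure Φ)
    (f πu : Θ × Φ → ℝ)
    (hf0 : ∀ x, 0 ≤ f x)
    (Zu : ℝ)
    (r : Θ)
    (m0 : ℝ) (hm0pos : 0 < m0)
    (m1 : ℝ) (hm1pos : 0 < m1)
    (q w : Φ → ℝ)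
    (hq : ∀ φ, q φ = πu (r, φ) / m0)
    (hw : ∀ φ, w φ = f (r, φ) * πu (r, φ) / (m1 * Zu))
    (πc : Φ → ℝ) (hπc0 : ∀ φ, 0 ≤ πc φ)
    (hsupp : ∀ᵐ φ ∂μφ, 0 < πc φ * f (r, φ) → 0 < πu (r, φ))
    (Zc : ℝ) (hZc : Zc = ∫ φ, f (r, φ) * πc φ ∂μφ)
    (B : ℝ) (hB : B = Zc / Zu) :
    B = m1 / m0 * ∫ φ, (πc φ / q φ) * w φ ∂μφ := by
  have hsupp' : ∀ᵐ φ ∂μφ, πu (r, φ) = 0 → πc φ * f (r, φ) = 0 :=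
    hsupp.mono fun φ => mul_eq_zero_of_pos_imp_pos (hπc0 φ) (hf0 (r, φ))
  simp_rw [hq, hw]
  rw [integral_div_div_mul_mul_div m0 (m1 * Zu) hsupp', hB, hZc]
  field_simp [hm0pos.ne', hm1pos.ne']

/-- Verdinelli–Wasserman generalized Savage–Dickey density ratio: for an arbitrary
constrained prior `πc` for the nuisance parameters (satisfying a support condition),
the Bayes factor equals the Savage–Dickey density ratio `m1 / m0` times the
expectation, under the conditional posterior `w`, of the ratio `πc / q` of the
constrained prior to the conditional unconstrained prior. -/
theorem generalized_savage_dickey_density_ratio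
    {Θ Φ : Type*} [MeasurableSpace Θ] [MeasurableSpace Φ]
    (μθ : Measure Θ) (μφ : Measure Φ) [SigmaFinite μθ] [SigmaFinite μφ]
    (f πu : Θ × Φ → ℝ)
    (hfm : Measurable f) (hπum : Measurable πu)
    (hf0 : ∀ x, 0 ≤ f x) (hπu0 : ∀ x, 0 ≤ πu x)
    (hπu1 : ∫ x, πu x ∂(μθ.prod μφ) = 1)
    (Zu : ℝ) (hZu : Zu = ∫ x, f x * πu x ∂(μθ.prod μφ))
    (hZuInt : Integrable (fun x => f x * πu x) (μθ.prod μφ))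
    (hZupos : 0 < Zu)
    (r : Θ)
    (m0 : ℝ) (hm0 : m0 = ∫ φ, πu (r, φ) ∂μφ)
    (hm0Int : Integrable (fun φ => πu (r, φ)) μφ) (hm0pos : 0 < m0)
    (m1 : ℝ) (hm1 : m1 = Zu⁻¹ * ∫ φ, f (r, φ) * πu (r, φ) ∂μφ)
    (hm1Int : Integrable (fun φ => f (r, φ) * πu (r, φ)) μφ) (hm1pos : 0 < m1)
    (q w : Φ → ℝ)
    (hq : ∀ φ, q φ = πu (r, φ) / m0)
    (hw : ∀ φ, w φ = f (r, φ) * πu (r, φ) / (m1 * Zu))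
    (πc : Φ → ℝ) (hπcm : Measurable πc) (hπc0 : ∀ φ, 0 ≤ πc φ)
    (hπc1 : ∫ φ, πc φ ∂μφ = 1)
    (hsupp : ∀ᵐ φ ∂μφ, 0 < πc φ * f (r, φ) → 0 < πu (r, φ))
    (Zc : ℝ) (hZc : Zc = ∫ φ, f (r, φ) * πc φ ∂μφ)
    (B : ℝ) (hB : B = Zc / Zu) :
    B = m1 / m0 * ∫ φ, (πc φ / q φ) * w φ ∂μφ :=
  generalized_savage_dickey_density_ratio_general μφ f πu hf0 Zu r m0 hm0pos m1 hm1pos q w hq hw πc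
    hπc0 hsupp Zc hZc B hB
end

section
/- Let α₁, α₂, α₃, α₄ > 0 with α₂ + α₃ > 1. Then the marginal probability density of θ_e = γ₂ − γ₃ at 0, when (γ₁, γ₂, γ₃, γ₄) follows the Dirichlet(α₁, α₂, α₃, α₄) distribution, equals Γ(α₂+α₃)(α₁+α₂+α₃+α₄−1) / (Γ(α₂)Γ(α₃)(α₂+α₃−1) 2^{α₂+α₃−1}). Concretely, as an integral identity: ∫∫_{x>0, t>0, x+2t<1} (1/B(α)) x^{α₁−1} t^{α₂+α₃−2} (1 − x − 2t)^{α₄−1} dt dx = Γ(α₂+α₃)(α₁+α₂+α₃+α₄−1) / (Γ(α₂)Γ(α₃)(α₂+α₃−1) 2^{α₂+α₃−1}), where B(α) = Γ(α₁)Γ(α₂)Γ(α₃)Γ(α₄)/Γ(α₁+α₂+α₃+α₄). -/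
/-!
Slice the triangle `{x, t > 0, x + k t < 1}` at fixed `x`: after the substitution
`t = (1 - x) s / k` the inner integral is the Beta integral `k^(-b) (1 - x)^(b+c-1) B(b, c)`,
and the outer one is `B(a, b + c)`; their product is `Γ(a) Γ(b) Γ(c) / Γ(a + b + c)`.
Here `a = α₁`, `b = α₂ + α₃ - 1`, `c = α₄`, `k = 2`, and the recurrence `Γ(s + 1) = s Γ(s)` at
`s = α₂ + α₃ - 1` and at `s = α₁ + α₂ + α₃ + α₄ - 1` turns this into the stated constant.
-/

open MeasureTheory Real Set ProbabilityTheory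

lemma setLIntegral_regionBetween {α : Type*} [MeasurableSpace α] {μ : Measure α}
    {f g : α → ℝ} {s : Set α} (hf : Measurable f) (hg : Measurable g) (hs : MeasurableSet s)
    {F : α × ℝ → ENNReal} (hF : Measurable F) :
    ∫⁻ p in regionBetween f g s, F p ∂(μ.prod volume) =
      ∫⁻ x in s, (∫⁻ y in Ioo (f x) (g x), F (x, y)) ∂μ := by
  rw [← lintegral_indicator (measurableSet_regionBetween hf hg hs),
    lintegral_prod _ (hF.indicator (measurableSet_regionBetween hf hg hs)).aemeasurable,
    ← lintegral_indicator hs]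
  congr 1
  funext x
  by_cases hx : x ∈ s
  · rw [indicator_of_mem hx, ← lintegral_indicator measurableSet_Ioo]
    congr 1
    funext y
    simp only [indicator, regionBetween, mem_ofPred_eq, hx, true_and]
  · simp [indicator, regionBetween, hx]

lemma lintegral_rpow_mul_one_sub_rpow {a b : ℝ} (ha : 0 < a) (hb : 0 < b) :
    ∫⁻ x in Ioo 0 1, ENNReal.ofReal (x ^ (a - 1) * (1 - x) ^ (b - 1)) =
      ENNReal.ofReal (beta a b) := by
  have hB := beta_pos ha hb
  have h := lintegral_betaPDF_eq_one ha hb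
  rw [lintegral_betaPDF] at h
  simp_rw [mul_assoc, ENNReal.ofReal_mul (one_div_pos.2 hB).le] at h
  rw [lintegral_const_mul' _ _ ENNReal.ofReal_ne_top] at h
  calc _ = ENNReal.ofReal (beta a b) * ENNReal.ofReal (1 / beta a b) *
        ∫⁻ x in Ioo 0 1, ENNReal.ofReal (x ^ (a - 1) * (1 - x) ^ (b - 1)) := by
          rw [← ENNReal.ofReal_mul hB.le, mul_one_div_cancel hB.ne', ENNReal.ofReal_one, one_mul]
    _ = ENNReal.ofReal (beta a b) := by rw [mul_assoc, h, mul_one]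

lemma lintegral_rpow_mul_sub_rpow {a b c : ℝ} (ha : 0 < a) (hb : 0 < b) (hc : 0 < c) :
    ∫⁻ t in Ioo 0 c, ENNReal.ofReal (t ^ (a - 1) * (c - t) ^ (b - 1)) =
      ENNReal.ofReal (c ^ (a + b - 1) * beta a b) := by
  have himage : (c * ·) '' Ioo 0 1 = Ioo 0 c := by
    rw [image_mul_left_Ioo hc, mul_zero, mul_one]
  rw [← himage, lintegral_image_eq_lintegral_abs_deriv_mul (f' := fun _ => c) measurableSet_Ioo
    (fun y _ => by simpa using ((hasDerivAt_id y).const_mul c).hasDerivWithinAt)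
    (mul_right_injective₀ hc.ne').injOn, abs_of_pos hc]
  calc _ = ∫⁻ y in Ioo 0 1, ENNReal.ofReal (c ^ (a + b - 1)) *
        ENNReal.ofReal (y ^ (a - 1) * (1 - y) ^ (b - 1)) := by
        refine setLIntegral_congr_fun measurableSet_Ioo fun y hy => ?_
        rw [← ENNReal.ofReal_mul hc.le, ← ENNReal.ofReal_mul (by positivity)]
        congr 1
        rw [← mul_one_sub, mul_rpow hc.le hy.1.le, mul_rpow hc.le (by linarith [hy.2]),
          show a + b - 1 = 1 + (a - 1) + (b - 1) by ring, rpow_add hc, rpow_add hc, rpow_one]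
        ring
    _ = _ := by
        rw [lintegral_const_mul' _ _ ENNReal.ofReal_ne_top, lintegral_rpow_mul_one_sub_rpow ha hb,
          ← ENNReal.ofReal_mul (by positivity)]

lemma beta_add_mul_beta {a b c : ℝ} (ha : 0 < a) (hb : 0 < b) (hc : 0 < c) :
    beta a (b + c) * beta b c = Gamma a * Gamma b * Gamma c / Gamma (a + b + c) := by
  rw [beta, beta, ← add_assoc]
  field_simp

lemma triangle_eq_regionBetween {k : ℝ} (hk : 0 < k) :
    {p : ℝ × ℝ | 0 < p.1 ∧ 0 < p.2 ∧ p.1 + k * p.2 < 1} =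
      regionBetween 0 (fun x => (1 - x) / k) (Ioo 0 1) := by
  ext ⟨x, t⟩
  simp only [regionBetween, mem_ofPred_eq, mem_Ioo, Pi.zero_apply, lt_div_iff₀ hk]
  constructor
  · rintro ⟨hx, ht, hxt⟩
    exact ⟨⟨hx, by nlinarith⟩, ht, by linarith⟩
  · rintro ⟨⟨hx, -⟩, ht, hxt⟩
    exact ⟨hx, ht, by linarith⟩

theorem lintegral_dirichlet_triangle {a b c k : ℝ} (ha : 0 < a) (hb : 0 < b) (hc : 0 < c)
    (hk : 0 < k) :
    ∫⁻ p in {p : ℝ × ℝ | 0 < p.1 ∧ 0 < p.2 ∧ p.1 + k * p.2 < 1},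
        ENNReal.ofReal (p.1 ^ (a - 1) * p.2 ^ (b - 1) * (1 - p.1 - k * p.2) ^ (c - 1)) =
      ENNReal.ofReal (k ^ (-b) * (Gamma a * Gamma b * Gamma c / Gamma (a + b + c))) := by
  have inner (x : ℝ) (hx : x ∈ Ioo 0 1) :
      ∫⁻ t in Ioo 0 ((1 - x) / k),
          ENNReal.ofReal (x ^ (a - 1) * t ^ (b - 1) * (1 - x - k * t) ^ (c - 1)) =
        ENNReal.ofReal (x ^ (a - 1) * (1 - x) ^ (b + c - 1)) *
          ENNReal.ofReal (k ^ (-b) * beta b c) := by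
    have hx0 : 0 ≤ x := hx.1.le
    have hx1 : 0 < 1 - x := by linarith [hx.2]
    have hr : 0 < (1 - x) / k := div_pos hx1 hk
    calc _ = ∫⁻ t in Ioo 0 ((1 - x) / k), ENNReal.ofReal (x ^ (a - 1) * k ^ (c - 1)) *
          ENNReal.ofReal (t ^ (b - 1) * ((1 - x) / k - t) ^ (c - 1)) := by
          refine setLIntegral_congr_fun measurableSet_Ioo fun t ht => ?_
          rw [← ENNReal.ofReal_mul (by positivity)]
          congr 1
          rw [show 1 - x - k * t = k * ((1 - x) / k - t) by field_simp,
            mul_rpow hk.le (by linarith [ht.2])]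
          ring
      _ = _ := by
          rw [lintegral_const_mul' _ _ ENNReal.ofReal_ne_top,
            lintegral_rpow_mul_sub_rpow hb hc hr, ← ENNReal.ofReal_mul (by positivity),
            ← ENNReal.ofReal_mul (by positivity)]
          have hk' : k ^ (c - 1) = k ^ (-b) * k ^ (b + c - 1) := by
            rw [← rpow_add hk]
            ring_nf
          rw [div_rpow hx1.le hk.le, hk']
          field_simp
  rw [triangle_eq_regionBetween hk, Measure.volume_eq_prod, setLIntegral_regionBetween
      measurable_zero (by fun_prop) measurableSet_Ioo (by fun_prop)]
  simp only [Pi.zero_apply]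
  rw [setLIntegral_congr_fun measurableSet_Ioo inner,
    lintegral_mul_const' _ _ ENNReal.ofReal_ne_top,
    lintegral_rpow_mul_one_sub_rpow ha (by positivity),
    ← ENNReal.ofReal_mul (beta_pos ha (by positivity)).le, ← beta_add_mul_beta ha hb hc]
  congr 1
  ring

theorem integral_dirichlet_triangle {a b c k : ℝ} (ha : 0 < a) (hb : 0 < b) (hc : 0 < c)
    (hk : 0 < k) :
    ∫ p in {p : ℝ × ℝ | 0 < p.1 ∧ 0 < p.2 ∧ p.1 + k * p.2 < 1},
        p.1 ^ (a - 1) * p.2 ^ (b - 1) * (1 - p.1 - k * p.2) ^ (c - 1) =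
      k ^ (-b) * (Gamma a * Gamma b * Gamma c / Gamma (a + b + c)) := by
  have hS : MeasurableSet {p : ℝ × ℝ | 0 < p.1 ∧ 0 < p.2 ∧ p.1 + k * p.2 < 1} := by
    measurability
  rw [integral_eq_lintegral_of_nonneg_ae, lintegral_dirichlet_triangle ha hb hc hk,
    ENNReal.toReal_ofReal (by positivity)]
  · refine ae_restrict_of_forall_mem hS fun p ⟨hp₁, hp₂, hp⟩ => ?_
    have : 0 ≤ 1 - p.1 - k * p.2 := by linarith
    positivity
  · fun_prop

/-- The marginal probability density of `θ_e = γ₂ − γ₃` at `0`, when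
`(γ₁, γ₂, γ₃, γ₄)` follows the `Dirichlet(α₁, α₂, α₃, α₄)` distribution, equals
`Γ(α₂+α₃)(α₁+α₂+α₃+α₄−1) / (Γ(α₂)Γ(α₃)(α₂+α₃−1) 2^{α₂+α₃−1})`, stated as an
integral identity over the slice `{γ₂ = γ₃ = t}`. -/
theorem dirichlet_marginal_density_of_difference_at_zero
    (α₁ α₂ α₃ α₄ : ℝ) (h₁ : 0 < α₁) (h₂ : 0 < α₂) (h₃ : 0 < α₃) (h₄ : 0 < α₄)
    (h23 : 1 < α₂ + α₃) :
    ∫ p in {p : ℝ × ℝ | 0 < p.1 ∧ 0 < p.2 ∧ p.1 + 2 * p.2 < 1},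
        (1 / (Real.Gamma α₁ * Real.Gamma α₂ * Real.Gamma α₃ * Real.Gamma α₄ /
            Real.Gamma (α₁ + α₂ + α₃ + α₄))) *
          p.1 ^ (α₁ - 1) * p.2 ^ (α₂ + α₃ - 2) * (1 - p.1 - 2 * p.2) ^ (α₄ - 1) =
      Real.Gamma (α₂ + α₃) * (α₁ + α₂ + α₃ + α₄ - 1) /
        (Real.Gamma α₂ * Real.Gamma α₃ * (α₂ + α₃ - 1) * 2 ^ (α₂ + α₃ - 1)) := by
  set b := α₂ + α₃ - 1 with hb_def
  have hb : 0 < b := by linarith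
  have hΓb : Gamma (α₂ + α₃) = b * Gamma b := by
    rw [← Gamma_add_one hb.ne', hb_def, sub_add_cancel]
  have hΓsum : Gamma (α₁ + α₂ + α₃ + α₄) = (α₁ + b + α₄) * Gamma (α₁ + b + α₄) := by
    rw [← Gamma_add_one (by positivity), hb_def]
    ring_nf
  rw [show α₂ + α₃ - 2 = b - 1 by ring]
  simp only [mul_assoc, integral_const_mul]
  simp only [← mul_assoc]
  rw [integral_dirichlet_triangle h₁ hb h₄ two_pos, hΓb, hΓsum, rpow_neg zero_le_two]
  field_simp
  ring
end
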